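/- Every mutual search algorithm for two agents on n sites has cost at least (4 − 2√3)(n − 1). -/

import Mathlib

/-!
Let `c` be the cost and `ℓ v` the length of row `v`. The last edge `(a, b)` of the whole
algorithm between two sites of a set `A` is preceded by every other edge leaving `a` or `b`
inside `A`, so its cost bounds `|row a ∩ A| + |row b ∩ A|`; hence some `v ∈ A` has
`2 ℓ v ≤ c + 2 (n - |A|)`. Applied to the `n - k` longest rows this gives
`2 ℓ_(k) ≤ min (2c, c + 2k)` for the `k`-th shortest row, and summing against
`∑ ℓ v = n(n-1)/2` gives a quadratic inequality in `c` whose root is `(4 - 2√3)(n - 1)`.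
-/

/-- An ordered tournament on `n` sites: a tournament (exactly one directed
edge between each pair of distinct vertices) together with a total order
on its edges, given by an (injective-on-edges) time stamp. -/
structure OrdTournament (n : ℕ) where
  adj : Fin n → Fin n → Bool
  irrefl : ∀ i, adj i i = false
  oneway : ∀ i j : Fin n, i ≠ j → (adj i j = true ↔ adj j i = false)
  time : Fin n → Fin n → ℕ
  time_inj : ∀ i j k l : Fin n, adj i j = true → adj k l = true →
      time i j = time k l → (i, j) = (k, l)

namespace OrdTournament

variable {n : ℕ}

/-- Row `i`: the targets of the out-edges of vertex `i`. -/
def row (T : OrdTournament n) (i : Fin n) : Finset (Fin n) :=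
  Finset.univ.filter (fun j => T.adj i j = true)

/-- The length of row `i` (the outdegree of `i`). -/
def rowLen (T : OrdTournament n) (i : Fin n) : ℕ := (T.row i).card

/-- The maximum row length. -/
def maxRow (T : OrdTournament n) : ℕ := Finset.univ.sup T.rowLen

/-- The number of queries of row `i` strictly before the edge `(a,b)`. -/
def nBefore (T : OrdTournament n) (i a b : Fin n) : ℕ :=
  ((T.row i).filter (fun j => T.time i j < T.time a b)).card

/-- The cost of edge `(a,b)`:
`|E_a^{≺(a,b)}| + 1 + |E_b^{≺(a,b)}|`. -/
def edgeCost (T : OrdTournament n) (a b : Fin n) : ℕ :=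
  T.nBefore a a b + 1 + T.nBefore b a b

/-- The cost of the algorithm: the maximum edge cost. -/
def cost (T : OrdTournament n) : ℕ :=
  (Finset.univ.filter (fun p : Fin n × Fin n => T.adj p.1 p.2 = true)).sup
    (fun p => T.edgeCost p.1 p.2)

end OrdTournament

open Finset

lemma sum_range_add_two_mul (c : ℝ) (m : ℕ) :
    ∑ k ∈ range m, (c + 2 * k) = m * c + m * (m - 1) := by
  induction m with
  | zero => simp
  | succ m ih => rw [sum_range_succ, ih]; push_cast; ring

lemma sum_range_min_le (c : ℝ) {m n : ℕ} (hmn : m ≤ n) :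
    ∑ k ∈ range n, min (2 * c) (c + 2 * k) ≤ m * c + m * (m - 1) + (n - m) * (2 * c) := by
  rw [← sum_range_add_sum_Ico _ hmn, ← sum_range_add_two_mul]
  gcongr with k
  · exact min_le_right _ _
  · calc ∑ k ∈ Ico m n, min (2 * c) (c + 2 * k) ≤ ∑ _k ∈ Ico m n, 2 * c :=
          sum_le_sum fun _ _ => min_le_left _ _
      _ = (n - m) * (2 * c) := by simp [Nat.cast_sub hmn]

/-- `M` is the split point of `sum_range_min_le` that optimizes the bound; since `α = 4 - 2√3`
solves `α² - 8α + 4 = 0`, the `(N - 1)²` terms cancel in `hquad`. -/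
lemma four_sub_two_sqrt_three_mul_le {N M c : ℝ} (hN : 1 ≤ N)
    (hM : M ≤ 1 + (2 - √3) * (N - 1)) (hM' : (2 - √3) * (N - 1) ≤ M)
    (h : N * (N - 1) ≤ M * c + M * (M - 1) + (N - M) * (2 * c)) :
    (4 - 2 * √3) * (N - 1) ≤ c := by
  have hs : √3 ^ 2 = 3 := Real.sq_sqrt (by norm_num)
  have hs0 : 0 ≤ √3 := Real.sqrt_nonneg 3
  have hs2 : √3 ≤ 2 := by nlinarith
  have hs5 : 5 ≤ 3 * √3 := by nlinarith
  have hpos : 0 < 2 * N - M := by nlinarith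
  have hquad : (4 - 2 * √3) * (N - 1) * (2 * N - M) ≤ N * (N - 1) - M * (M - 1) := by
    linear_combination mul_nonneg (sub_nonneg.2 hM) (sub_nonneg.2 hM') +
      mul_nonneg (sub_nonneg.2 hN) (sub_nonneg.2 hs5) + -(N - 1) ^ 2 * hs
  exact le_of_mul_le_mul_right (by linear_combination hquad + h) hpos

namespace OrdTournament

variable {n : ℕ} (T : OrdTournament n)

def edges : Finset (Fin n × Fin n) :=
  univ.filter fun p => T.adj p.1 p.2 = true

@[simp]
lemma mem_edges {p : Fin n × Fin n} : p ∈ T.edges ↔ T.adj p.1 p.2 = true := by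
  simp [edges]

@[simp]
lemma mem_row {i j : Fin n} : j ∈ T.row i ↔ T.adj i j = true := by
  simp [row]

lemma ne_of_adj {i j : Fin n} (h : T.adj i j = true) : i ≠ j := by
  rintro rfl
  simp [T.irrefl] at h

lemma notMem_row_self (i : Fin n) : i ∉ T.row i := by
  simp [T.irrefl]

lemma adj_or_adj {i j : Fin n} (h : i ≠ j) : T.adj i j = true ∨ T.adj j i = true := by
  cases hij : T.adj i j
  · exact Or.inr ((T.oneway j i h.symm).2 hij)
  · exact Or.inl rfl

lemma rowLen_le_pred (v : Fin n) : T.rowLen v ≤ n - 1 := by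
  have : T.row v ⊆ univ.erase v := fun j hj =>
    mem_erase.2 ⟨(T.ne_of_adj (T.mem_row.1 hj)).symm, mem_univ j⟩
  simpa [rowLen] using card_le_card this

lemma edgeCost_le_cost {a b : Fin n} (h : T.adj a b = true) : T.edgeCost a b ≤ T.cost :=
  le_sup (s := T.edges) (f := fun p => T.edgeCost p.1 p.2) (b := (a, b)) (T.mem_edges.2 h)

lemma sum_rowLen_eq_card_edges : ∑ v, T.rowLen v = #T.edges := by
  rw [edges, card_filter, Fintype.sum_prod_type]
  exact sum_congr rfl fun v _ => by rw [rowLen, row, card_filter]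

/-- `(a, b) ↦ {a, b}` is a bijection from the edges onto the unordered pairs of distinct sites. -/
lemma card_edges : #T.edges = n.choose 2 := by
  have hinj : Set.InjOn (Function.uncurry Sym2.mk) (T.edges : Set (Fin n × Fin n)) := by
    rintro ⟨a, b⟩ hab ⟨c, d⟩ hcd h
    simp only [mem_coe, mem_edges] at hab hcd
    rcases Sym2.eq_iff.1 h with ⟨rfl, rfl⟩ | ⟨rfl, rfl⟩
    · rfl
    · have := (T.oneway a b (T.ne_of_adj hab)).1 hab
      simp_all
  have himage : T.edges.image (Function.uncurry Sym2.mk) =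
      (univ : Finset (Fin n)).offDiag.image (Function.uncurry Sym2.mk) := by
    ext z
    simp only [mem_image, mem_edges, mem_offDiag, mem_univ, true_and, Prod.exists,
      Function.uncurry_apply_pair]
    constructor
    · rintro ⟨a, b, hab, rfl⟩
      exact ⟨a, b, T.ne_of_adj hab, rfl⟩
    · rintro ⟨a, b, hab, rfl⟩
      rcases T.adj_or_adj hab with h | h
      · exact ⟨a, b, h, rfl⟩
      · exact ⟨b, a, h, Sym2.eq_swap⟩
  rw [← card_image_of_injOn hinj, himage, Sym2.card_image_offDiag, card_univ, Fintype.card_fin]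

lemma sum_rowLen : ∑ v, T.rowLen v = n.choose 2 := by
  rw [sum_rowLen_eq_card_edges, card_edges]

lemma card_erase_le_nBefore {i a b : Fin n} (hab : T.adj a b = true) {S : Finset (Fin n)}
    (hS : S ⊆ T.row i) (hlast : ∀ x ∈ S, T.time i x ≤ T.time a b) :
    #(S.erase b) ≤ T.nBefore i a b := by
  refine card_le_card fun x hx => ?_
  obtain ⟨hxb, hxS⟩ := mem_erase.1 hx
  refine mem_filter.2 ⟨hS hxS, (hlast x hxS).lt_of_ne fun h => hxb ?_⟩
  exact congrArg Prod.snd (T.time_inj _ _ _ _ (T.mem_row.1 (hS hxS)) hab h)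

lemma card_add_card_le_edgeCost {a b : Fin n} (hab : T.adj a b = true)
    {S S' : Finset (Fin n)} (hS : S ⊆ T.row a) (hS' : S' ⊆ T.row b)
    (hlast : ∀ x ∈ S, T.time a x ≤ T.time a b) (hlast' : ∀ x ∈ S', T.time b x ≤ T.time a b) :
    #S + #S' ≤ T.edgeCost a b := by
  have ha := T.card_erase_le_nBefore hab hS hlast
  have hb := T.card_erase_le_nBefore hab hS' hlast'
  rw [erase_eq_of_notMem fun h => T.notMem_row_self b (hS' h)] at hb
  have := pred_card_le_card_erase (s := S) (a := b)
  unfold edgeCost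
  omega

lemma rowLen_le_cost (v : Fin n) : T.rowLen v ≤ T.cost := by
  obtain he | hne := (T.row v).eq_empty_or_nonempty
  · simp [rowLen, he]
  obtain ⟨j, hj, hlast⟩ := exists_max_image (T.row v) (T.time v) hne
  have hvj := T.mem_row.1 hj
  have h := T.card_add_card_le_edgeCost hvj subset_rfl (empty_subset _) hlast (by simp)
  rw [card_empty, add_zero] at h
  exact h.trans (T.edgeCost_le_cost hvj)

lemma rowLen_le_card_row_inter_add (A : Finset (Fin n)) (v : Fin n) :
    T.rowLen v ≤ #(T.row v ∩ A) + (n - #A) := by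
  calc T.rowLen v ≤ #(T.row v ∩ A ∪ Aᶜ) := card_le_card fun x hx => by
        by_cases hxA : x ∈ A <;> simp [hx, hxA]
    _ ≤ #(T.row v ∩ A) + #Aᶜ := card_union_le _ _
    _ = #(T.row v ∩ A) + (n - #A) := by rw [card_compl, Fintype.card_fin]

lemma exists_card_row_inter_add_le_cost {A : Finset (Fin n)} (hA : 1 < #A) :
    ∃ a ∈ A, ∃ b ∈ A, #(T.row a ∩ A) + #(T.row b ∩ A) ≤ T.cost := by
  set EA := T.edges.filter fun p => p.1 ∈ A ∧ p.2 ∈ A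
  have hmem {u x : Fin n} (hu : u ∈ A) (hx : x ∈ T.row u ∩ A) : (u, x) ∈ EA := by
    simp only [mem_inter, mem_row] at hx
    simp [EA, hu, hx]
  have hne : EA.Nonempty := by
    obtain ⟨i, hi, j, hj, hij⟩ := one_lt_card.1 hA
    rcases T.adj_or_adj hij with h | h
    · exact ⟨_, hmem hi (mem_inter.2 ⟨T.mem_row.2 h, hj⟩)⟩
    · exact ⟨_, hmem hj (mem_inter.2 ⟨T.mem_row.2 h, hi⟩)⟩
  obtain ⟨⟨a, b⟩, hab, hlast⟩ := exists_max_image EA (fun p => T.time p.1 p.2) hne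
  simp only [EA, mem_filter, mem_edges] at hab
  obtain ⟨hadj, ha, hb⟩ := hab
  refine ⟨a, ha, b, hb, le_trans ?_ (T.edgeCost_le_cost hadj)⟩
  exact T.card_add_card_le_edgeCost hadj inter_subset_left inter_subset_left
    (fun x hx => hlast _ (hmem ha hx)) (fun x hx => hlast _ (hmem hb hx))

lemma exists_two_mul_rowLen_le {A : Finset (Fin n)} (hA : A.Nonempty) :
    ∃ v ∈ A, 2 * T.rowLen v ≤ T.cost + 2 * (n - #A) := by
  obtain hA1 | hA1 := (one_le_card.2 hA).eq_or_lt
  · obtain ⟨v, rfl⟩ := card_eq_one.1 hA1.symm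
    have := T.rowLen_le_cost v
    have := T.rowLen_le_pred v
    exact ⟨v, mem_singleton_self v, by rw [card_singleton]; omega⟩
  obtain ⟨a, ha, b, hb, hab⟩ := T.exists_card_row_inter_add_le_cost hA1
  have := T.rowLen_le_card_row_inter_add A a
  have := T.rowLen_le_card_row_inter_add A b
  rcases le_total (T.rowLen a) (T.rowLen b) with h | h
  · exact ⟨a, ha, by omega⟩
  · exact ⟨b, hb, by omega⟩

lemma two_mul_rowLen_sort_le (k : Fin n) :
    2 * T.rowLen (Tuple.sort T.rowLen k) ≤ T.cost + 2 * k := by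
  set σ := Tuple.sort T.rowLen
  obtain ⟨v, hv, hle⟩ :=
    T.exists_two_mul_rowLen_le (A := (Ici k).map σ.toEmbedding) ⟨σ k, by simp⟩
  obtain ⟨k', hk', rfl⟩ := mem_map.1 hv
  have hmono : T.rowLen (σ k) ≤ T.rowLen (σ k') :=
    Tuple.monotone_sort T.rowLen (mem_Ici.1 hk')
  rw [card_map, Fin.card_Ici] at hle
  have := k.isLt
  simp only [Equiv.coe_toEmbedding] at hle
  omega

lemma two_mul_sum_rowLen_le :
    2 * ∑ v, T.rowLen v ≤ ∑ k ∈ range n, min (2 * T.cost) (T.cost + 2 * k) := by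
  rw [mul_sum, ← Equiv.sum_comp (Tuple.sort T.rowLen), ← Fin.sum_univ_eq_sum_range]
  refine sum_le_sum fun k _ => le_min ?_ (T.two_mul_rowLen_sort_le k)
  have := T.rowLen_le_cost (Tuple.sort T.rowLen k)
  omega

lemma mul_sub_one_le {m : ℕ} (hmn : m ≤ n) :
    (n : ℝ) * (n - 1) ≤ m * T.cost + m * (m - 1) + (n - m) * (2 * T.cost) := by
  have h := T.two_mul_sum_rowLen_le
  rw [sum_rowLen] at h
  calc (n : ℝ) * (n - 1) = ((2 * n.choose 2 : ℕ) : ℝ) := by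
        push_cast [Nat.cast_choose_two]; ring
    _ ≤ ((∑ k ∈ range n, min (2 * T.cost) (T.cost + 2 * k) : ℕ) : ℝ) := by exact_mod_cast h
    _ = ∑ k ∈ range n, min (2 * (T.cost : ℝ)) (T.cost + 2 * k) := by push_cast; rfl
    _ ≤ _ := sum_range_min_le _ hmn

end OrdTournament

/-- Every mutual search algorithm for two agents on `n` sites has cost at
least `(4 - 2√3)(n - 1)`. -/
theorem ms_lower_bound {n : ℕ} (T : OrdTournament n) :
    (4 - 2 * Real.sqrt 3) * ((n : ℝ) - 1) ≤ (T.cost : ℝ) := by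
  have hs : √3 ^ 2 = 3 := Real.sq_sqrt (by norm_num)
  have hs2 : √3 ≤ 2 := by nlinarith
  have hs1 : 1 ≤ √3 := by nlinarith [Real.sqrt_nonneg 3]
  rcases Nat.eq_zero_or_pos n with rfl | hn
  · push_cast; linarith [T.cost.cast_nonneg (α := ℝ)]
  have hN : (1 : ℝ) ≤ n := by exact_mod_cast hn
  set x : ℝ := 1 + (2 - √3) * (n - 1)
  have hx : 0 ≤ x := by nlinarith
  have hmn : ⌊x⌋₊ ≤ n := Nat.floor_le_of_le (by nlinarith)
  exact four_sub_two_sqrt_three_mul_le hN (Nat.floor_le hx)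
    (by linarith [Nat.lt_floor_add_one x]) (T.mul_sub_one_le hmn)
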